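/- For all integers n and m, the Laguerre functions on the real line are orthonormal: ∫_ℝ Ψ_n(x) · Ψ_m(x) dx equals 1 if n = m and 0 otherwise. -/

import Mathlib

open MeasureTheory

/-- The Laguerre polynomial `L_n(x) = ∑_{k=0}^{n} (n choose k) (-x)^k / k!`. -/
noncomputable def laguerre (n : ℕ) (x : ℝ) : ℝ :=
  ∑ k ∈ Finset.range (n + 1), (n.choose k : ℝ) * (-x) ^ k / (Nat.factorial k : ℝ)

/-- The Laguerre functions on the real line, indexed by `n : ℤ`. -/
noncomputable def laguerreFun (n : ℤ) (x : ℝ) : ℝ :=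
  if 0 ≤ n then (if 0 ≤ x then Real.exp (-x / 2) * laguerre n.toNat x else 0)
  else (if x < 0 then -(Real.exp (x / 2) * laguerre (-n - 1).toNat (-x)) else 0)

open Finset in
lemma laguerre_alt_sum (n : ℕ) :
    ∑ i ∈ range (n + 1), (-1 : ℝ) ^ i * n.choose i = if n = 0 then 1 else 0 := by
  have h := congrArg (Int.cast : ℤ → ℝ) (@Int.alternating_sum_range_choose n)
  push_cast [apply_ite (Int.cast : ℤ → ℝ)] at h
  simpa using h

open Finset in
lemma laguerre_lemA (n i : ℕ) :
    ∑ j ∈ range (n + 1), (-1 : ℝ) ^ j * n.choose j * j.choose i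
      = if i = n then (-1 : ℝ) ^ n else 0 := by
  by_cases hin : i ≤ n
  · have h1 : ∀ j ∈ range (n + 1), (-1 : ℝ) ^ j * n.choose j * j.choose i
        = if i ≤ j then (-1 : ℝ) ^ j * (n.choose i * (n - i).choose (j - i)) else 0 := by
      intro j hj
      rw [mem_range] at hj
      by_cases hij : i ≤ j
      · rw [if_pos hij, mul_assoc, ← Nat.cast_mul, Nat.choose_mul hij,
          Nat.cast_mul]
      · rw [if_neg hij, Nat.choose_eq_zero_of_lt (show j < i by omega)]
        simp
    rw [Finset.sum_congr rfl h1, ← Finset.sum_filter]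
    have h2 : (range (n + 1)).filter (fun j => i ≤ j) = Finset.Ico i (n + 1) := by
      ext j; simp [Nat.lt_succ_iff]; omega
    rw [h2, Finset.sum_Ico_eq_sum_range]
    have h3 : n + 1 - i = (n - i) + 1 := by omega
    rw [h3]
    have h4 : ∀ l ∈ range (n - i + 1), (-1 : ℝ) ^ (i + l) * (↑(n.choose i) * ↑((n - i).choose (i + l - i)))
        = ((-1) ^ i * n.choose i) * ((-1) ^ l * (n - i).choose l) := by
      intro l _
      rw [show i + l - i = l from by omega, pow_add]
      ring
    rw [Finset.sum_congr rfl h4, ← Finset.mul_sum, laguerre_alt_sum (n - i)]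
    by_cases h : i = n
    · subst h; simp
    · rw [if_neg (by omega), if_neg h, mul_zero]
  · rw [if_neg (by omega)]
    apply Finset.sum_eq_zero
    intro j hj
    rw [mem_range] at hj
    rw [Nat.choose_eq_zero_of_lt (show j < i by omega)]
    simp

open Finset in
lemma laguerre_vand (j k N : ℕ) (hN : j < N) :
    ((j + k).choose j : ℝ) = ∑ i ∈ range N, (j.choose i : ℝ) * k.choose i := by
  have h1 : (j + k).choose j = ∑ i ∈ range (j + 1), j.choose i * k.choose (j - i) := by
    rw [Nat.add_choose_eq]
    rw [Finset.Nat.sum_antidiagonal_eq_sum_range_succ_mk]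
  have h2 : ∑ i ∈ range (j + 1), j.choose i * k.choose (j - i)
      = ∑ i ∈ range (j + 1), j.choose (j - i) * k.choose (j - i) := by
    apply Finset.sum_congr rfl
    intro i hi
    rw [mem_range, Nat.lt_succ_iff] at hi
    rw [Nat.choose_symm hi]
  have h3 : ∑ i ∈ range (j + 1), j.choose (j - i) * k.choose (j - i)
      = ∑ i ∈ range (j + 1), j.choose i * k.choose i := by
    have := Finset.sum_range_reflect (fun i => j.choose i * k.choose i) (j + 1)
    simpa using this
  have h4 : (∑ i ∈ range (j + 1), j.choose i * k.choose i : ℕ)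
      = ∑ i ∈ range N, j.choose i * k.choose i := by
    apply Finset.sum_subset
    · exact Finset.range_subset_range.mpr (by omega)
    · intro i _ hi
      rw [mem_range, not_lt] at hi
      rw [Nat.choose_eq_zero_of_lt (by omega), zero_mul]
  rw [h1, h2, h3, h4]
  push_cast
  rfl

open Finset in
lemma laguerre_comb (n m : ℕ) :
    ∑ j ∈ range (n + 1), ∑ k ∈ range (m + 1),
      (((-1 : ℝ) ^ j * n.choose j / j.factorial) * ((-1 : ℝ) ^ k * m.choose k / k.factorial))
        * (j + k).factorial
      = if n = m then 1 else 0 := by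
  set N := max n m + 1 with hN
  have hnN : n < N := by omega
  have hmN : m < N := by omega
  have hterm : ∀ j ∈ range (n + 1), ∀ k ∈ range (m + 1),
      (((-1 : ℝ) ^ j * n.choose j / j.factorial) * ((-1 : ℝ) ^ k * m.choose k / k.factorial))
        * (j + k).factorial
      = ∑ i ∈ range N, ((-1 : ℝ) ^ j * n.choose j * j.choose i)
          * ((-1 : ℝ) ^ k * m.choose k * k.choose i) := by
    intro j hj k hk
    rw [mem_range] at hj hk
    have hfact : ((j + k).factorial : ℝ) = (k + j).choose k * j.factorial * k.factorial := by
      rw [add_comm k j]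
      rw_mod_cast [Nat.add_choose_mul_factorial_mul_factorial j k]
    rw [hfact, laguerre_vand k j N (by omega), Finset.sum_mul, Finset.sum_mul, Finset.mul_sum]
    apply Finset.sum_congr rfl
    intro i _
    have hj0 : (j.factorial : ℝ) ≠ 0 := Nat.cast_ne_zero.mpr (Nat.factorial_ne_zero j)
    have hk0 : (k.factorial : ℝ) ≠ 0 := Nat.cast_ne_zero.mpr (Nat.factorial_ne_zero k)
    field_simp
  rw [Finset.sum_congr rfl (fun j hj => Finset.sum_congr rfl (fun k hk => hterm j hj k hk))]
  have swap : ∑ j ∈ range (n + 1), ∑ k ∈ range (m + 1), ∑ i ∈ range N,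
      ((-1 : ℝ) ^ j * n.choose j * j.choose i) * ((-1 : ℝ) ^ k * m.choose k * k.choose i)
      = ∑ i ∈ range N, (∑ j ∈ range (n + 1), (-1 : ℝ) ^ j * n.choose j * j.choose i)
          * (∑ k ∈ range (m + 1), (-1 : ℝ) ^ k * m.choose k * k.choose i) := by
    calc ∑ j ∈ range (n + 1), ∑ k ∈ range (m + 1), ∑ i ∈ range N,
          ((-1 : ℝ) ^ j * n.choose j * j.choose i) * ((-1 : ℝ) ^ k * m.choose k * k.choose i)
        = ∑ j ∈ range (n + 1), ∑ i ∈ range N, ∑ k ∈ range (m + 1),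
          ((-1 : ℝ) ^ j * n.choose j * j.choose i) * ((-1 : ℝ) ^ k * m.choose k * k.choose i) :=
          Finset.sum_congr rfl fun j _ => Finset.sum_comm
      _ = ∑ i ∈ range N, ∑ j ∈ range (n + 1), ∑ k ∈ range (m + 1),
          ((-1 : ℝ) ^ j * n.choose j * j.choose i) * ((-1 : ℝ) ^ k * m.choose k * k.choose i) :=
          Finset.sum_comm
      _ = ∑ i ∈ range N, (∑ j ∈ range (n + 1), (-1 : ℝ) ^ j * n.choose j * j.choose i)
          * (∑ k ∈ range (m + 1), (-1 : ℝ) ^ k * m.choose k * k.choose i) := by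
          apply Finset.sum_congr rfl
          intro i _
          rw [Finset.sum_mul]
          exact Finset.sum_congr rfl fun j _ => (Finset.mul_sum _ _ _).symm
  rw [swap]
  simp only [laguerre_lemA]
  have hprod : ∀ i ∈ range N, (if i = n then (-1 : ℝ) ^ n else 0) * (if i = m then (-1 : ℝ) ^ m else 0)
      = if n = m then (if i = n then (1 : ℝ) else 0) else 0 := by
    intro i _
    by_cases h1 : i = n
    · by_cases h2 : i = m
      · subst h1; subst h2
        simp only [if_pos rfl, if_true, eq_self_iff_true]
        rw [← pow_add]
        exact Even.neg_one_pow ⟨i, rfl⟩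
      · have hnm : n ≠ m := fun h => h2 (h1.trans h)
        rw [if_pos h1, if_neg h2, mul_zero, if_neg hnm]
    · rw [if_neg h1, zero_mul]
      split_ifs <;> simp [h1]
  rw [Finset.sum_congr rfl hprod]
  by_cases hnm : n = m
  · rw [if_pos hnm]
    rw [Finset.sum_congr rfl (fun i _ => if_pos hnm)]
    rw [Finset.sum_ite_eq' (range N) n (fun _ => (1 : ℝ))]
    rw [if_pos (Finset.mem_range.mpr hnN)]
  · rw [if_neg hnm]
    rw [Finset.sum_congr rfl (fun i _ => if_neg hnm)]
    exact Finset.sum_const_zero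

lemma laguerre_integrableOn (p : ℕ) :
    IntegrableOn (fun x : ℝ => Real.exp (-x) * x ^ p) (Set.Ioi 0) := by
  have h := Real.GammaIntegral_convergent (s := (p : ℝ) + 1) (by positivity)
  refine h.congr_fun ?_ measurableSet_Ioi
  intro x hx
  simp only
  rw [show ((p : ℝ) + 1 - 1) = (p : ℝ) by ring, Real.rpow_natCast]

lemma laguerre_integral_exp_pow (p : ℕ) :
    ∫ x in Set.Ioi (0 : ℝ), Real.exp (-x) * x ^ p = p.factorial := by
  have h1 : Real.Gamma ((p : ℝ) + 1) = ∫ x in Set.Ioi (0 : ℝ), Real.exp (-x) * x ^ ((p : ℝ) + 1 - 1) :=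
    Real.Gamma_eq_integral (by positivity)
  rw [Real.Gamma_nat_eq_factorial] at h1
  have h2 : ∫ x in Set.Ioi (0 : ℝ), Real.exp (-x) * x ^ p
      = ∫ x in Set.Ioi (0 : ℝ), Real.exp (-x) * x ^ ((p : ℝ) + 1 - 1) := by
    apply setIntegral_congr_fun measurableSet_Ioi
    intro x hx
    simp only
    rw [show ((p : ℝ) + 1 - 1) = (p : ℝ) by ring, Real.rpow_natCast]
  rw [h2, ← h1]

open Finset in
lemma laguerre_main (n m : ℕ) :
    ∫ x : ℝ, (if 0 ≤ x then Real.exp (-x / 2) * laguerre n x else 0) *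
      (if 0 ≤ x then Real.exp (-x / 2) * laguerre m x else 0) = if n = m then 1 else 0 := by
  have h0 : ∀ᵐ x : ℝ, x ≠ 0 := by
    rw [ae_iff]
    simp only [not_ne_iff]
    simpa using measure_singleton (0 : ℝ)
  have h1 : ∫ x : ℝ, (if 0 ≤ x then Real.exp (-x / 2) * laguerre n x else 0) *
      (if 0 ≤ x then Real.exp (-x / 2) * laguerre m x else 0)
      = ∫ x in Set.Ioi (0 : ℝ), Real.exp (-x) * (laguerre n x * laguerre m x) := by
    rw [← integral_indicator measurableSet_Ioi]
    apply integral_congr_ae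
    filter_upwards [h0] with x hx
    rcases lt_or_gt_of_ne hx with hlt | hgt
    · rw [if_neg (not_le.mpr hlt), Set.indicator_of_notMem (by simpa using hlt.le), zero_mul]
    · rw [if_pos hgt.le, if_pos hgt.le, Set.indicator_of_mem (Set.mem_Ioi.mpr hgt)]
      rw [show -x = -x / 2 + -x / 2 by ring, Real.exp_add]
      ring
  rw [h1]
  have expand : ∀ x ∈ Set.Ioi (0 : ℝ), Real.exp (-x) * (laguerre n x * laguerre m x)
      = ∑ j ∈ range (n + 1), ∑ k ∈ range (m + 1),
          (((-1 : ℝ) ^ j * n.choose j / j.factorial) * ((-1 : ℝ) ^ k * m.choose k / k.factorial))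
            * (Real.exp (-x) * x ^ (j + k)) := by
    intro x _
    unfold laguerre
    rw [Finset.sum_mul_sum, Finset.mul_sum]
    apply Finset.sum_congr rfl
    intro j _
    rw [Finset.mul_sum]
    apply Finset.sum_congr rfl
    intro k _
    rw [neg_pow x j, neg_pow x k, pow_add]
    ring
  rw [setIntegral_congr_fun measurableSet_Ioi expand]
  rw [integral_finset_sum _ (fun j _ => integrable_finset_sum _ (fun k _ =>
    ((laguerre_integrableOn (j + k)).const_mul _)))]
  have h2 : ∀ j ∈ range (n + 1),
      ∫ x in Set.Ioi (0 : ℝ), ∑ k ∈ range (m + 1),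
        (((-1 : ℝ) ^ j * n.choose j / j.factorial) * ((-1 : ℝ) ^ k * m.choose k / k.factorial))
          * (Real.exp (-x) * x ^ (j + k))
      = ∑ k ∈ range (m + 1),
        (((-1 : ℝ) ^ j * n.choose j / j.factorial) * ((-1 : ℝ) ^ k * m.choose k / k.factorial))
          * (j + k).factorial := by
    intro j _
    rw [integral_finset_sum _ (fun k _ => (laguerre_integrableOn (j + k)).const_mul _)]
    apply Finset.sum_congr rfl
    intro k _
    rw [integral_const_mul, laguerre_integral_exp_pow]
  rw [Finset.sum_congr rfl h2]
  exact laguerre_comb n m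

/-- Orthonormality of the Laguerre functions `Ψ_n` on the real line. -/
theorem laguerreFun_orthonormal (n m : ℤ) :
    ∫ x : ℝ, laguerreFun n x * laguerreFun m x = if n = m then 1 else 0 := by
  have h0 : ∀ᵐ x : ℝ, x ≠ 0 := by
    rw [ae_iff]
    simp only [not_ne_iff]
    simpa using measure_singleton (0 : ℝ)
  by_cases hn : 0 ≤ n <;> by_cases hm : 0 ≤ m
  · have : ∀ x : ℝ, laguerreFun n x * laguerreFun m x
        = (if 0 ≤ x then Real.exp (-x / 2) * laguerre n.toNat x else 0) *
          (if 0 ≤ x then Real.exp (-x / 2) * laguerre m.toNat x else 0) := by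
      intro x
      rw [laguerreFun, laguerreFun, if_pos hn, if_pos hm]
    simp_rw [this]
    rw [laguerre_main n.toNat m.toNat]
    congr 1
    simp only [eq_iff_iff]
    omega
  · have : ∀ x : ℝ, laguerreFun n x * laguerreFun m x = 0 := by
      intro x
      rw [laguerreFun, laguerreFun, if_pos hn, if_neg hm]
      by_cases hx : 0 ≤ x
      · rw [if_neg (not_lt.mpr hx), mul_zero]
      · rw [if_neg hx, zero_mul]
    simp_rw [this]
    rw [integral_zero, if_neg (by omega)]
  · have : ∀ x : ℝ, laguerreFun n x * laguerreFun m x = 0 := by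
      intro x
      rw [laguerreFun, laguerreFun, if_neg hn, if_pos hm]
      by_cases hx : 0 ≤ x
      · rw [if_neg (not_lt.mpr hx), zero_mul]
      · rw [if_pos (not_le.mp hx), if_neg hx, mul_zero]
    simp_rw [this]
    rw [integral_zero, if_neg (by omega)]
  · set n' := (-n - 1).toNat with hn'
    set m' := (-m - 1).toNat with hm'
    have key : ∫ x : ℝ, laguerreFun n x * laguerreFun m x
        = ∫ x : ℝ, (if 0 ≤ x then Real.exp (-x / 2) * laguerre n' x else 0) *
            (if 0 ≤ x then Real.exp (-x / 2) * laguerre m' x else 0) := by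
      rw [← integral_neg_eq_self (fun x : ℝ => (if 0 ≤ x then Real.exp (-x / 2) * laguerre n' x else 0) *
            (if 0 ≤ x then Real.exp (-x / 2) * laguerre m' x else 0))]
      apply integral_congr_ae
      filter_upwards [h0] with x hx
      rcases lt_or_gt_of_ne hx with hlt | hgt
      · rw [laguerreFun, laguerreFun, if_neg hn, if_neg hm, if_pos hlt, if_pos hlt,
          if_pos (by linarith : (0:ℝ) ≤ -x), if_pos (by linarith : (0:ℝ) ≤ -x)]
        rw [show -(-x) / 2 = x / 2 by ring]
        ring
      · rw [laguerreFun, laguerreFun, if_neg hn, if_neg hm, if_neg (not_lt.mpr hgt.le),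
          if_neg (not_lt.mpr hgt.le), if_neg (not_le.mpr (by linarith : -x < (0:ℝ))),
          zero_mul, zero_mul]
    rw [key, laguerre_main n' m']
    congr 1
    simp only [eq_iff_iff]
    omega
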